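/- The quasi-shuffle product * on k⟨A⟩, defined by the recursion (aw)*(bv) = a(w*bv) + b(aw*v) + (a⋄b)(w*v) with unit 1, is commutative and associative. -/

import Mathlib

/-!
Quasi-shuffle algebras (Hoffman–Ihara).  We model the span `kA` of the alphabet
(with its commutative associative product `⋄`, written `*` in `L`) as a
non-unital commutative `k`-algebra `L`, and the word algebra `k⟨A⟩` as the
tensor algebra `TensorAlgebra k L`, in which a word `a₁⋯aₙ` is the product
`ι a₁ * ⋯ * ι aₙ`.
-/

open TensorAlgebra

variable (k : Type*) [Field k]
variable {L : Type*} [NonUnitalCommRing L] [Module k L]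
  [SMulCommClass k L L] [IsScalarTower k L L]

/-- The word `a₁⋯aₙ` as an element of the tensor algebra. -/
def word (l : List L) : TensorAlgebra k L := (l.map fun a => TensorAlgebra.ι k a).prod

/-!
On words, the recursion reduces both `(x * y) * z` and `x * (y * z)` for `x = a x'`, `y = b y'`,
`z = c z'` to the same seven-term combination: the leading letter is one of `a, b, c, a⋄b, a⋄c,
b⋄c, a⋄b⋄c`, each followed by a product of three words of smaller total length, bracketed to the
left on one side and to the right on the other. Induction on the total length therefore gives
associativity, and the same argument with the symmetric three-term expansion gives
commutativity. Since words span `k⟨A⟩`, bilinearity extends the recursion and both identities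
from words to all elements.
-/

section WordAlgebra

omit [SMulCommClass k L L] [IsScalarTower k L L]

lemma word_nil : word k ([] : List L) = 1 := rfl

lemma word_cons (a : L) (l : List L) : word k (a :: l) = ι k a * word k l := by
  simp [word]

lemma word_append (u v : List L) : word k (u ++ v) = word k u * word k v := by
  simp [word]

lemma span_range_word :
    Submodule.span k (Set.range (word k : List L → TensorAlgebra k L)) = ⊤ := by
  rw [eq_top_iff]
  rintro x -
  induction x using TensorAlgebra.induction with
  | algebraMap r =>
    rw [Algebra.algebraMap_eq_smul_one]
    exact Submodule.smul_mem _ _ (Submodule.subset_span ⟨[], rfl⟩)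
  | ι a => exact Submodule.subset_span ⟨[a], by simp [word]⟩
  | mul x y hx hy =>
    have hxy := Submodule.mul_mem_mul hx hy
    rw [Submodule.span_mul_span] at hxy
    refine Submodule.span_le.2 ?_ hxy
    rintro _ ⟨_, ⟨u, rfl⟩, _, ⟨v, rfl⟩, rfl⟩
    exact Submodule.subset_span ⟨u ++ v, word_append k u v⟩
  | add x y hx hy => exact Submodule.add_mem _ hx hy

section Ext

variable {P : Type*} [AddCommMonoid P] [Module k P]

lemma linearMap_ext_word {f g : TensorAlgebra k L →ₗ[k] P}
    (h : ∀ u : List L, f (word k u) = g (word k u)) : f = g :=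
  LinearMap.ext_on_range (span_range_word k) h

lemma linearMap_ext_word₂ {f g : TensorAlgebra k L →ₗ[k] TensorAlgebra k L →ₗ[k] P}
    (h : ∀ u v : List L, f (word k u) (word k v) = g (word k u) (word k v)) : f = g :=
  linearMap_ext_word k fun u => linearMap_ext_word k fun v => h u v

end Ext

def QuasiShuffleRec (m : TensorAlgebra k L →ₗ[k] TensorAlgebra k L →ₗ[k] TensorAlgebra k L) :
    Prop :=
  ∀ (a b : L) (x y : TensorAlgebra k L),
    m (ι k a * x) (ι k b * y) = ι k a * m x (ι k b * y) + ι k b * m (ι k a * x) y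
      + ι k (a * b) * m x y

section QuasiShuffle

variable {k}
variable {m : TensorAlgebra k L →ₗ[k] TensorAlgebra k L →ₗ[k] TensorAlgebra k L}

lemma quasiShuffleRec_of_word
    (hrec : ∀ (a b : L) (v w : List L),
      m (ι k a * word k v) (ι k b * word k w)
        = ι k a * m (word k v) (ι k b * word k w) + ι k b * m (ι k a * word k v) (word k w)
          + ι k (a * b) * m (word k v) (word k w)) :
    QuasiShuffleRec k m := by
  intro a b
  let la := LinearMap.mulLeft k (ι k a)
  let lb := LinearMap.mulLeft k (ι k b)
  have hbil : (m.comp la).compl₂ lb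
      = (m.compl₂ lb).compr₂ la + (m.comp la).compr₂ lb
        + m.compr₂ (LinearMap.mulLeft k (ι k (a * b))) :=
    linearMap_ext_word₂ k fun v w => hrec a b v w
  exact LinearMap.congr_fun₂ hbil

lemma QuasiShuffleRec.comm_word (hmul : ∀ x, m 1 x = x) (hmur : ∀ x, m x 1 = x)
    (hrec : QuasiShuffleRec k m) :
    ∀ u v : List L, m (word k u) (word k v) = m (word k v) (word k u)
  | [], v => by rw [word_nil, hmul, hmur]
  | u, [] => by rw [word_nil, hmul, hmur]
  | a :: u, b :: v => by
    have h₁ := hrec.comm_word hmul hmur u (b :: v)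
    have h₂ := hrec.comm_word hmul hmur (a :: u) v
    have h₃ := hrec.comm_word hmul hmur u v
    simp only [word_cons] at h₁ h₂ ⊢
    rw [hrec a b, hrec b a, h₁, h₂, h₃, mul_comm b a]
    abel
termination_by u v => u.length + v.length

lemma QuasiShuffleRec.comm (hmul : ∀ x, m 1 x = x) (hmur : ∀ x, m x 1 = x)
    (hrec : QuasiShuffleRec k m) (x y : TensorAlgebra k L) : m x y = m y x := by
  have hword : m = m.flip := linearMap_ext_word₂ k (hrec.comm_word hmul hmur)
  exact LinearMap.congr_fun₂ hword x y

lemma QuasiShuffleRec.expand_left_assoc (hrec : QuasiShuffleRec k m) (a b c : L)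
    (x y z : TensorAlgebra k L) :
    m (m (ι k a * x) (ι k b * y)) (ι k c * z)
      = ι k a * m (m x (ι k b * y)) (ι k c * z) + ι k b * m (m (ι k a * x) y) (ι k c * z)
        + ι k c * m (m (ι k a * x) (ι k b * y)) z + ι k (a * b) * m (m x y) (ι k c * z)
        + ι k (a * c) * m (m x (ι k b * y)) z + ι k (b * c) * m (m (ι k a * x) y) z
        + ι k (a * b * c) * m (m x y) z := by
  rw [hrec a b x y]
  simp only [map_add, LinearMap.add_apply, mul_add]
  rw [hrec a c, hrec b c, hrec (a * b) c]
  abel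

lemma QuasiShuffleRec.expand_right_assoc (hrec : QuasiShuffleRec k m) (a b c : L)
    (x y z : TensorAlgebra k L) :
    m (ι k a * x) (m (ι k b * y) (ι k c * z))
      = ι k a * m x (m (ι k b * y) (ι k c * z)) + ι k b * m (ι k a * x) (m y (ι k c * z))
        + ι k c * m (ι k a * x) (m (ι k b * y) z) + ι k (a * b) * m x (m y (ι k c * z))
        + ι k (a * c) * m x (m (ι k b * y) z) + ι k (b * c) * m (ι k a * x) (m y z)
        + ι k (a * b * c) * m x (m y z) := by
  rw [hrec b c y z]
  simp only [map_add, mul_add]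
  rw [hrec a b, hrec a c, hrec a (b * c), mul_assoc a b c]
  abel

lemma QuasiShuffleRec.assoc_word (hmul : ∀ x, m 1 x = x) (hmur : ∀ x, m x 1 = x)
    (hrec : QuasiShuffleRec k m) :
    ∀ u v w : List L,
      m (m (word k u) (word k v)) (word k w) = m (word k u) (m (word k v) (word k w))
  | [], v, w => by rw [word_nil, hmul, hmul]
  | u, [], w => by rw [word_nil, hmur, hmul]
  | u, v, [] => by rw [word_nil, hmur, hmur]
  | a :: u, b :: v, c :: w => by
    have h₁ := hrec.assoc_word hmul hmur u (b :: v) (c :: w)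
    have h₂ := hrec.assoc_word hmul hmur (a :: u) v (c :: w)
    have h₃ := hrec.assoc_word hmul hmur (a :: u) (b :: v) w
    have h₄ := hrec.assoc_word hmul hmur u v (c :: w)
    have h₅ := hrec.assoc_word hmul hmur u (b :: v) w
    have h₆ := hrec.assoc_word hmul hmur (a :: u) v w
    have h₇ := hrec.assoc_word hmul hmur u v w
    simp only [word_cons] at h₁ h₂ h₃ h₄ h₅ h₆ ⊢
    rw [hrec.expand_left_assoc, hrec.expand_right_assoc, h₁, h₂, h₃, h₄, h₅, h₆, h₇]
termination_by u v w => u.length + v.length + w.length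

lemma QuasiShuffleRec.assoc (hmul : ∀ x, m 1 x = x) (hmur : ∀ x, m x 1 = x)
    (hrec : QuasiShuffleRec k m) (x y z : TensorAlgebra k L) : m (m x y) z = m x (m y z) := by
  have hword : m.compr₂ m = (LinearMap.llcomp k _ _ _ ∘ₗ m).compl₂ m :=
    linearMap_ext_word₂ k fun u v => linearMap_ext_word k fun w => hrec.assoc_word hmul hmur u v w
  exact LinearMap.congr_fun (LinearMap.congr_fun₂ hword x y) z

end QuasiShuffle

end WordAlgebra

/--
The quasi-shuffle product (the `k`-bilinear product on `k⟨A⟩`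
with unit `1` satisfying the recursion
`(aw)*(bv) = a(w*bv) + b(aw*v) + (a⋄b)(w*v)`) is commutative and associative.
-/
theorem stmt3
    (m : TensorAlgebra k L →ₗ[k] TensorAlgebra k L →ₗ[k] TensorAlgebra k L)
    (hmul : ∀ x, m 1 x = x) (hmur : ∀ x, m x 1 = x)
    (hmrec : ∀ (a b : L) (v w : List L),
      m (TensorAlgebra.ι k a * word k v) (TensorAlgebra.ι k b * word k w)
        = TensorAlgebra.ι k a * m (word k v) (TensorAlgebra.ι k b * word k w)
          + TensorAlgebra.ι k b * m (TensorAlgebra.ι k a * word k v) (word k w)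
          + TensorAlgebra.ι k (a * b) * m (word k v) (word k w)) :
    (∀ x y, m x y = m y x) ∧ (∀ x y z, m (m x y) z = m x (m y z)) := by
  have hrec := quasiShuffleRec_of_word hmrec
  exact ⟨hrec.comm hmul hmur, hrec.assoc hmul hmur⟩
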